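/- arXiv:1308.5153 — 3 statements merged into one kernel-verified Lean document; each statement's English description precedes it below -/
import Mathlib

section
/- Let f ∈ K[[x_1,...,x_n]] with ord(f) = s ≥ 2, and suppose ⟨f, m^k·j(f)⟩ = ⟨g, m^k·j(g)⟩ for some g ∈ K[[x]] and some k ≥ 2 with m^{⌊(k+2s)/2⌋} ⊆ m·⟨f⟩ + m^2·j(f). Then f is contact equivalent to g, assuming the finite determinacy theorem: if m^{l+2} ⊆ m⟨f⟩ + m^2 j(f) then f is contact (2l − ord(f) + 2)-determined. -/
noncomputable section

/-- The formal power series ring `K[[x_1,...,x_n]]`. -/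
abbrev PS (K : Type*) [Field K] (n : ℕ) := MvPowerSeries (Fin n) K

/-- The maximal ideal `m` of `K[[x]]` (power series with zero constant term). -/
def mx (K : Type*) [Field K] (n : ℕ) : Ideal (PS K n) :=
  RingHom.ker (MvPowerSeries.constantCoeff : PS K n →+* K)

/-- The `i`-th formal partial derivative of a power series. -/
def pd {K : Type*} [Field K] {n : ℕ} (i : Fin n) (f : PS K n) : PS K n :=
  fun e => (e i + 1 : ℕ) • MvPowerSeries.coeff (e + Finsupp.single i 1) f

/-- The Jacobian ideal `j(f) = ⟨∂f/∂x_1, ..., ∂f/∂x_n⟩`. -/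
def jId {K : Type*} [Field K] {n : ℕ} (f : PS K n) : Ideal (PS K n) :=
  Ideal.span (Set.range fun i => pd i f)

/-- The Tjurina ideal `tj(f) = ⟨f⟩ + j(f)`. -/
def tjId {K : Type*} [Field K] {n : ℕ} (f : PS K n) : Ideal (PS K n) :=
  Ideal.span {f} ⊔ jId f

/-- The ideal defining the `k`-th Tjurina algebra: `⟨f, m^k j(f)⟩`. -/
def TkId {K : Type*} [Field K] {n : ℕ} (k : ℕ) (f : PS K n) : Ideal (PS K n) :=
  Ideal.span {f} ⊔ (mx K n) ^ k * jId f

/-- The ideal defining the `k`-th Milnor algebra: `m^k j(f)`. -/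
def MkId {K : Type*} [Field K] {n : ℕ} (k : ℕ) (f : PS K n) : Ideal (PS K n) :=
  (mx K n) ^ k * jId f

/-- Contact equivalence: `g = u · φ(f)`. -/
def ContactEquiv {K : Type*} [Field K] {n : ℕ} (f g : PS K n) : Prop :=
  ∃ (φ : PS K n ≃ₐ[K] PS K n) (u : (PS K n)ˣ), g = (u : PS K n) * φ f

/-- Right equivalence: `g = φ(f)`. -/
def RightEquiv {K : Type*} [Field K] {n : ℕ} (f g : PS K n) : Prop :=
  ∃ φ : PS K n ≃ₐ[K] PS K n, g = φ f

/-- `f` is contact `N`-determined. -/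
def ContactDetermined {K : Type*} [Field K] {n : ℕ} (N : ℕ) (f : PS K n) : Prop :=
  ∀ g : PS K n, g - f ∈ (mx K n) ^ (N + 1) → ContactEquiv f g

/-- `f` is right `N`-determined. -/
def RightDetermined {K : Type*} [Field K] {n : ℕ} (N : ℕ) (f : PS K n) : Prop :=
  ∀ g : PS K n, g - f ∈ (mx K n) ^ (N + 1) → RightEquiv f g

/-! Writing `g = a f + q` with `q ∈ m^k j(f) ⊆ m^(k+s-1)`, the factor `a` must be a unit: otherwise
`g`, and then through `f ∈ ⟨g, m^k j(g)⟩` also `f`, would have order `> s`. Hence `a⁻¹ g` agrees with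
`f` modulo `m^(k+s-1)`, and the hypothesis on `m^⌊(k+2s)/2⌋` makes `f` contact determined to a
degree below `k+s-1` by the determinacy theorem. -/

theorem Derivation.map_mem_pow_of_mem_pow_succ {R A : Type*} [CommSemiring R] [CommSemiring A]
    [Algebra R A] (D : Derivation R A A) (I : Ideal A) {t : ℕ} {x : A} (hx : x ∈ I ^ (t + 1)) :
    D x ∈ I ^ t := by
  induction t generalizing x with
  | zero => simp
  | succ t ih =>
    rw [pow_succ'] at hx
    refine Submodule.mul_induction_on hx (fun a ha b hb => ?_) fun x y hx hy => ?_
    · rw [Derivation.leibniz, smul_eq_mul, smul_eq_mul, pow_succ']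
      exact add_mem (Ideal.mul_mem_mul ha (ih hb)) (Ideal.mul_mem_right _ _ (pow_succ' I t ▸ hb))
    · rw [map_add]
      exact add_mem hx hy

section PowerSeries

variable {K : Type*} [Field K] {n : ℕ}

theorem pd_eq_pderiv (i : Fin n) (f : PS K n) : pd i f = MvPowerSeries.pderiv K i f := by
  ext d
  change (d i + 1 : ℕ) • MvPowerSeries.coeff (d + Finsupp.single i 1) f = _
  rw [MvPowerSeries.coeff_pderiv, nsmul_eq_mul, mul_comm]
  push_cast
  rfl

theorem jId_le_pow {t : ℕ} {f : PS K n} (hf : f ∈ mx K n ^ (t + 1)) : jId f ≤ mx K n ^ t := by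
  rw [jId, Ideal.span_le]
  rintro _ ⟨i, rfl⟩
  change pd i f ∈ _
  rw [pd_eq_pderiv]
  exact Derivation.map_mem_pow_of_mem_pow_succ _ _ hf

theorem pow_mul_jId_le {t : ℕ} (k : ℕ) {f : PS K n} (hf : f ∈ mx K n ^ (t + 1)) :
    mx K n ^ k * jId f ≤ mx K n ^ (k + t) :=
  (Ideal.mul_mono_right (jId_le_pow hf)).trans (pow_add _ k t).ge

theorem TkId_le_pow {t k : ℕ} (hk : 1 ≤ k) {f : PS K n} (hf : f ∈ mx K n ^ (t + 1)) :
    TkId k f ≤ mx K n ^ (t + 1) :=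
  sup_le ((Ideal.span_singleton_le_iff_mem _).mpr hf)
    ((pow_mul_jId_le k hf).trans (Ideal.pow_le_pow_right (by omega)))

theorem exists_units_mul_sub_mem_of_TkId_eq {t k : ℕ} (hk : 2 ≤ k) {f g : PS K n}
    (hf : f ∈ mx K n ^ (t + 1)) (hf' : f ∉ mx K n ^ (t + 2)) (heq : TkId k f = TkId k g) :
    ∃ u : (PS K n)ˣ, (u : PS K n) * g - f ∈ mx K n ^ (k + t) := by
  have hg : g ∈ TkId k f := heq ▸ Ideal.mem_sup_left (Ideal.mem_span_singleton_self g)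
  obtain ⟨_, hp, q, hq, rfl⟩ := Submodule.mem_sup.mp hg
  obtain ⟨a, rfl⟩ := Ideal.mem_span_singleton'.mp hp
  replace hq := pow_mul_jId_le k hf hq
  by_cases ha : MvPowerSeries.constantCoeff a = 0
  · have hg : a * f + q ∈ mx K n ^ (t + 2) :=
      add_mem (pow_succ' (mx K n) (t + 1) ▸ Ideal.mul_mem_mul ha hf)
        (Ideal.pow_le_pow_right (by omega) hq)
    have hfg : f ∈ TkId k (a * f + q) := heq ▸ Ideal.mem_sup_left (Ideal.mem_span_singleton_self f)
    exact absurd (TkId_le_pow (by omega) hg hfg) hf'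
  · obtain ⟨u, rfl⟩ : IsUnit a :=
      MvPowerSeries.isUnit_iff_constantCoeff.mpr (isUnit_iff_ne_zero.mpr ha)
    refine ⟨u⁻¹, ?_⟩
    rw [mul_add, ← mul_assoc, Units.inv_mul, one_mul, add_sub_cancel_left]
    exact Ideal.mul_mem_left _ _ hq

theorem ContactEquiv.of_units_mul {f g : PS K n} (u : (PS K n)ˣ)
    (h : ContactEquiv f (u * g)) : ContactEquiv f g := by
  obtain ⟨φ, v, hv⟩ := h
  refine ⟨φ, u⁻¹ * v, ?_⟩
  rw [Units.val_mul, mul_assoc, ← hv, ← mul_assoc, Units.inv_mul, one_mul]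

end PowerSeries

theorem stmt_7_general {K : Type*} [Field K] {n : ℕ} (f g : PS K n)
    (s k : ℕ) (hs : 2 ≤ s) (hk : 2 ≤ k)
    (hf : f ∈ (mx K n) ^ s) (hf' : f ∉ (mx K n) ^ (s + 1))
    (hBGM : ∀ l : ℕ, (mx K n) ^ (l + 2) ≤ mx K n * Ideal.span {f} + (mx K n) ^ 2 * jId f →
      ContactDetermined (2 * l - s + 2) f)
    (hsub : (mx K n) ^ ((k + 2 * s) / 2) ≤ mx K n * Ideal.span {f} + (mx K n) ^ 2 * jId f)
    (heq : TkId k f = TkId k g) :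
    ContactEquiv f g := by
  obtain ⟨t, rfl⟩ : ∃ t, s = t + 1 := ⟨s - 1, by omega⟩
  obtain ⟨u, hu⟩ := exists_units_mul_sub_mem_of_TkId_eq hk hf hf' heq
  set l := (k + 2 * (t + 1)) / 2 - 2
  have hdet : ContactDetermined (2 * l - (t + 1) + 2) f :=
    hBGM l (by rwa [show l + 2 = (k + 2 * (t + 1)) / 2 by omega])
  exact (hdet _ (Ideal.pow_le_pow_right (by omega) hu)).of_units_mul u

/-- if `⟨f, m^k j(f)⟩ = ⟨g, m^k j(g)⟩` for some `k ≥ 2` with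
`m^{⌊(k+2s)/2⌋} ⊆ m⟨f⟩ + m^2 j(f)`, then `f` is contact equivalent to `g`
(assuming the BGM contact determinacy theorem). -/
theorem stmt_7 {K : Type*} [Field K] [IsAlgClosed K] {n : ℕ} (f g : PS K n)
    (s k : ℕ) (hs : 2 ≤ s) (hk : 2 ≤ k)
    (hf : f ∈ (mx K n) ^ s) (hf' : f ∉ (mx K n) ^ (s + 1))
    (hBGM : ∀ l : ℕ, (mx K n) ^ (l + 2) ≤ mx K n * Ideal.span {f} + (mx K n) ^ 2 * jId f →
      ContactDetermined (2 * l - s + 2) f)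
    (hsub : (mx K n) ^ ((k + 2 * s) / 2) ≤ mx K n * Ideal.span {f} + (mx K n) ^ 2 * jId f)
    (heq : TkId k f = TkId k g) :
    ContactEquiv f g :=
  stmt_7_general f g s k hs hk hf hf' hBGM hsub heq
end
end

section
/- Let f, g ∈ K[[x_1,...,x_n]] with ord(f) = s ≥ 2 and τ(f) < ∞. If T_k(f) ≅ T_k(g) as K-algebras for some k ≥ 2τ(f) − 2s + 4, then f and g are contact equivalent. (Assuming Theorem 'contact': T_k(f) ≅ T_k(g) with m^{⌊(k+2s)/2⌋} ⊆ m⟨f⟩ + m^2 j(f) implies contact equivalence.) -/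
noncomputable section

/-!
The powers of `m` form a descending chain of subspaces modulo `tj(f)`; by Nakayama this chain
can only stabilise at `0`, so it reaches `0` after at most `τ = dim K[[x]]/tj(f)` steps, i.e.
`m^τ ⊆ tj(f)`. Multiplying by `m²` gives `m^{τ+2} ⊆ m⟨f⟩ + m² j(f)`, and the bound on `k`
gives `⌊(k+2s)/2⌋ ≥ τ + 2`, so Theorem `contact` applies.
-/

open Module

theorem Submodule.eq_bot_at_finrank_of_antitone {K V : Type*} [Field K] [AddCommGroup V]
    [Module K V] [FiniteDimensional K V] (N : ℕ → Submodule K V) (hN : Antitone N)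
    (hstable : ∀ j, N (j + 1) = N j → N j = ⊥) : N (finrank K V) = ⊥ := by
  have key : ∀ j, N j = ⊥ ∨ finrank K (N j) + j ≤ finrank K V := by
    intro j
    induction j with
    | zero => exact Or.inr (Submodule.finrank_le _)
    | succ j ih =>
      have hle : N (j + 1) ≤ N j := hN (Nat.le_add_right j 1)
      rcases ih with hbot | hrank
      · exact Or.inl (le_bot_iff.mp (hbot ▸ hle))
      · by_cases heq : N (j + 1) = N j
        · exact Or.inl (heq.trans (hstable j heq))
        · have := Submodule.finrank_lt_finrank_of_lt (lt_of_le_of_ne hle heq)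
          exact Or.inr (by omega)
  rcases key (finrank K V) with hbot | hrank
  · exact hbot
  · exact Submodule.finrank_eq_zero.mp (by omega)

theorem Ideal.pow_finrank_smul_top_eq_bot {R K M : Type*} [CommRing R] [Field K] [Algebra K R]
    [AddCommGroup M] [Module R M] [Module K M] [IsScalarTower K R M] [FiniteDimensional K M]
    {J : Ideal R} (hJ : J ≤ (⊥ : Ideal R).jacobson) :
    J ^ finrank K M • (⊤ : Submodule R M) = ⊥ := by
  have : IsNoetherian R M := isNoetherian_of_tower K inferInstance
  rw [← Submodule.restrictScalars_eq_bot_iff K]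
  refine Submodule.eq_bot_at_finrank_of_antitone
    (fun j => (J ^ j • (⊤ : Submodule R M)).restrictScalars K)
    (fun i j hij => Submodule.restrictScalars_mono K
      (Submodule.smul_mono_left (Ideal.pow_le_pow_right hij))) fun j hj => ?_
  rw [Submodule.restrictScalars_eq_bot_iff]
  replace hj := Submodule.restrictScalars_injective K _ _ hj
  refine Submodule.eq_bot_of_le_smul_of_le_jacobson_bot J _ (IsNoetherian.noetherian _) ?_ hJ
  rw [← Submodule.mul_smul, ← pow_succ', hj]

theorem Ideal.pow_finrank_quotient_le {R K : Type*} [CommRing R] [Field K] [Algebra K R]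
    {I J : Ideal R} [FiniteDimensional K (R ⧸ I)] (hJ : J ≤ (⊥ : Ideal R).jacobson) :
    J ^ finrank K (R ⧸ I) ≤ I := by
  have := Ideal.pow_finrank_smul_top_eq_bot (K := K) (M := R ⧸ I) hJ
  rwa [← Submodule.le_annihilator_iff, Submodule.annihilator_top,
    Ideal.annihilator_quotient] at this

theorem Ideal.pow_add_two_le_of_pow_le_sup {R : Type*} [CommRing R] {m A B : Ideal R} {t : ℕ}
    (h : m ^ t ≤ A ⊔ B) : m ^ (t + 2) ≤ m * A ⊔ m ^ 2 * B :=
  calc m ^ (t + 2) = m ^ 2 * m ^ t := by rw [pow_add, mul_comm]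
    _ ≤ m ^ 2 * (A ⊔ B) := Ideal.mul_mono_right h
    _ = m ^ 2 * A ⊔ m ^ 2 * B := Ideal.mul_sup _ _ _
    _ ≤ m * A ⊔ m ^ 2 * B :=
      sup_le_sup_right (Ideal.mul_mono_left (Ideal.pow_le_self two_ne_zero)) _

theorem mx_le_jacobson_bot {K : Type*} [Field K] {n : ℕ} :
    mx K n ≤ (⊥ : Ideal (PS K n)).jacobson := by
  rw [IsLocalRing.jacobson_eq_maximalIdeal ⊥ bot_ne_top]
  intro x (hx : MvPowerSeries.constantCoeff x = 0)
  rw [IsLocalRing.mem_maximalIdeal, mem_nonunits_iff, MvPowerSeries.isUnit_iff_constantCoeff, hx]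
  exact not_isUnit_zero

theorem stmt_9_general {K : Type*} [Field K] {n : ℕ} (f g : PS K n)
    (s k : ℕ)
    (htau : FiniteDimensional K (PS K n ⧸ tjId f))
    (hk : 2 * Module.finrank K (PS K n ⧸ tjId f) + 4 ≤ k + 2 * s)
    (hThm : ∀ k' : ℕ,
      Nonempty ((PS K n ⧸ TkId k' f) ≃ₐ[K] (PS K n ⧸ TkId k' g)) →
      (mx K n) ^ ((k' + 2 * s) / 2) ≤ mx K n * Ideal.span {f} + (mx K n) ^ 2 * jId f →
      ContactEquiv f g)
    (hiso : Nonempty ((PS K n ⧸ TkId k f) ≃ₐ[K] (PS K n ⧸ TkId k g))) :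
    ContactEquiv f g := by
  refine hThm k hiso ?_
  have htj : mx K n ^ finrank K (PS K n ⧸ tjId f) ≤ Ideal.span {f} ⊔ jId f :=
    Ideal.pow_finrank_quotient_le mx_le_jacobson_bot
  calc mx K n ^ ((k + 2 * s) / 2) ≤ mx K n ^ (finrank K (PS K n ⧸ tjId f) + 2) :=
        Ideal.pow_le_pow_right (by omega)
    _ ≤ mx K n * Ideal.span {f} ⊔ mx K n ^ 2 * jId f := Ideal.pow_add_two_le_of_pow_le_sup htj
    _ = mx K n * Ideal.span {f} + mx K n ^ 2 * jId f := (Submodule.add_eq_sup _ _).symm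

/-- if `T_k(f) ≅ T_k(g)` for some `k ≥ 2τ(f) − 2s + 4` then
`f` and `g` are contact equivalent (assuming Theorem `contact`). -/
theorem stmt_9 {K : Type*} [Field K] [IsAlgClosed K] {n : ℕ} (f g : PS K n)
    (s k : ℕ) (hs : 2 ≤ s)
    (hf : f ∈ (mx K n) ^ s) (hf' : f ∉ (mx K n) ^ (s + 1))
    (htau : FiniteDimensional K (PS K n ⧸ tjId f))
    (hk : 2 * Module.finrank K (PS K n ⧸ tjId f) + 4 ≤ k + 2 * s)
    (hThm : ∀ k' : ℕ,
      Nonempty ((PS K n ⧸ TkId k' f) ≃ₐ[K] (PS K n ⧸ TkId k' g)) →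
      (mx K n) ^ ((k' + 2 * s) / 2) ≤ mx K n * Ideal.span {f} + (mx K n) ^ 2 * jId f →
      ContactEquiv f g)
    (hiso : Nonempty ((PS K n ⧸ TkId k f) ≃ₐ[K] (PS K n ⧸ TkId k g))) :
    ContactEquiv f g :=
  stmt_9_general f g s k htau hk hThm hiso
end
end

section
/- Let f, g ∈ K[[x_1,...,x_n]] with ord(f) = s ≥ 2, μ(f) < ∞ and s' = ord(j(f)). If M_k(f) ≅ M_k(g) as K[[t]]-algebras for some k ≥ 2μ(f) − s − s' + 3, then f is right equivalent to g. (Assuming the theorem that the isomorphism M_k(f) ≅ M_k(g) together with m^{⌊(k+s+s'+1)/2⌋} ⊆ m^2 j(f) implies right equivalence.) -/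
noncomputable section

/-!
In the finite-dimensional algebra `K[[x]]/j(f)` the image of `m` lies in the Jacobson radical,
so by Nakayama its powers strictly decrease until they vanish; there are at most `μ` steps,
whence `m^μ ⊆ j(f)`. The bound on `k` gives `⌊(k+s+s'+1)/2⌋ ≥ μ + 2`, so
`m^⌊(k+s+s'+1)/2⌋ ⊆ m^2 m^μ ⊆ m^2 j(f)` and the assumed determinacy theorem applies.
-/

namespace Ideal

open Module

variable {K R : Type*} [Field K] [CommRing R] [Algebra K R]

theorem pow_succ_lt_of_le_jacobson_bot [IsNoetherianRing R] {I : Ideal R}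
    (hI : I ≤ jacobson ⊥) {j : ℕ} (hj : I ^ j ≠ ⊥) : I ^ (j + 1) < I ^ j := by
  refine lt_of_le_of_ne (pow_le_pow_right j.le_succ) fun heq => hj ?_
  exact Submodule.eq_bot_of_le_smul_of_le_jacobson_bot I (I ^ j) (IsNoetherian.noetherian _)
    (by rw [smul_eq_mul, ← pow_succ', heq]) hI

variable (K) in
theorem finrank_pow_add_le_of_le_jacobson_bot [FiniteDimensional K R] {I : Ideal R}
    (hI : I ≤ jacobson ⊥) {j : ℕ} (hj : I ^ j ≠ ⊥) :
    finrank K ((I ^ j).restrictScalars K) + j ≤ finrank K R := by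
  have : IsNoetherianRing R := isNoetherian_of_tower K inferInstance
  induction j with
  | zero => simpa using Submodule.finrank_le ((I ^ 0).restrictScalars K)
  | succ j ih =>
    have hj' : I ^ j ≠ ⊥ := ne_bot_of_le_ne_bot hj (pow_le_pow_right j.le_succ)
    have hlt : (I ^ (j + 1)).restrictScalars K < (I ^ j).restrictScalars K :=
      pow_succ_lt_of_le_jacobson_bot hI hj'
    have hrank := Submodule.finrank_lt_finrank_of_lt hlt
    have hle := ih hj'
    omega

theorem pow_finrank_eq_bot_of_le_jacobson_bot [FiniteDimensional K R] {I : Ideal R}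
    (hI : I ≤ jacobson ⊥) : I ^ finrank K R = ⊥ := by
  by_contra h
  have hle := finrank_pow_add_le_of_le_jacobson_bot K hI h
  have : (I ^ finrank K R).restrictScalars K = ⊥ := Submodule.finrank_eq_zero.mp (by omega)
  exact h ((Submodule.restrictScalars_eq_bot_iff K R R).mp this)

theorem pow_finrank_quotient_le_of_le_jacobson {I J : Ideal R} [FiniteDimensional K (R ⧸ J)]
    (hI : I ≤ J.jacobson) : I ^ finrank K (R ⧸ J) ≤ J := by
  have hmap : I.map (Quotient.mk J) ≤ jacobson ⊥ := by
    rw [← map_quotient_self J, ← map_jacobson_of_surjective Quotient.mk_surjective mk_ker.le]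
    exact map_mono hI
  have := pow_finrank_eq_bot_of_le_jacobson_bot (K := K) hmap
  rwa [← Ideal.map_pow, map_eq_bot_iff_le_ker, mk_ker] at this

end Ideal

theorem mx_le_jacobson {K : Type*} [Field K] {n : ℕ} (J : Ideal (PS K n)) :
    mx K n ≤ J.jacobson := by
  refine le_trans ?_ (Ideal.jacobson_mono bot_le)
  rw [IsLocalRing.jacobson_eq_maximalIdeal ⊥ bot_ne_top]
  intro x hx
  rw [IsLocalRing.mem_maximalIdeal, mem_nonunits_iff, MvPowerSeries.isUnit_iff_constantCoeff]
  rw [mx, RingHom.mem_ker] at hx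
  simp [hx]

theorem stmt_11_general {K : Type*} [Field K] {n : ℕ} (f g : PS K n)
    (s s' k : ℕ)
    (hmu : FiniteDimensional K (PS K n ⧸ jId f))
    (hk : 2 * Module.finrank K (PS K n ⧸ jId f) + 3 ≤ k + s + s')
    (hThm : ∀ k' : ℕ,
      (∃ e : (PS K n ⧸ MkId k' f) ≃ₐ[K] (PS K n ⧸ MkId k' g),
        e (Ideal.Quotient.mk (MkId k' f) f) = Ideal.Quotient.mk (MkId k' g) g) →
      (mx K n) ^ ((k' + s + s' + 1) / 2) ≤ (mx K n) ^ 2 * jId f →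
      RightEquiv f g)
    (hiso : ∃ e : (PS K n ⧸ MkId k f) ≃ₐ[K] (PS K n ⧸ MkId k g),
      e (Ideal.Quotient.mk (MkId k f) f) = Ideal.Quotient.mk (MkId k g) g) :
    RightEquiv f g := by
  refine hThm k hiso ?_
  set μ := Module.finrank K (PS K n ⧸ jId f)
  calc (mx K n) ^ ((k + s + s' + 1) / 2) ≤ (mx K n) ^ (2 + μ) :=
        Ideal.pow_le_pow_right (by omega)
    _ = (mx K n) ^ 2 * (mx K n) ^ μ := pow_add ..
    _ ≤ (mx K n) ^ 2 * jId f :=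
        Ideal.mul_mono_right (Ideal.pow_finrank_quotient_le_of_le_jacobson (mx_le_jacobson _))

/-- if `M_k(f) ≅ M_k(g)` as `K[[t]]`-algebras for some
`k ≥ 2μ(f) − s − s' + 3` then `f` and `g` are right equivalent
(assuming Theorem `right`). -/
theorem stmt_11 {K : Type*} [Field K] [IsAlgClosed K] {n : ℕ} (f g : PS K n)
    (s s' k : ℕ) (hs : 2 ≤ s)
    (hf : f ∈ (mx K n) ^ s) (hf' : f ∉ (mx K n) ^ (s + 1))
    (hs' : jId f ≤ (mx K n) ^ s') (hs'' : ¬ jId f ≤ (mx K n) ^ (s' + 1))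
    (hmu : FiniteDimensional K (PS K n ⧸ jId f))
    (hk : 2 * Module.finrank K (PS K n ⧸ jId f) + 3 ≤ k + s + s')
    (hThm : ∀ k' : ℕ,
      (∃ e : (PS K n ⧸ MkId k' f) ≃ₐ[K] (PS K n ⧸ MkId k' g),
        e (Ideal.Quotient.mk (MkId k' f) f) = Ideal.Quotient.mk (MkId k' g) g) →
      (mx K n) ^ ((k' + s + s' + 1) / 2) ≤ (mx K n) ^ 2 * jId f →
      RightEquiv f g)
    (hiso : ∃ e : (PS K n ⧸ MkId k f) ≃ₐ[K] (PS K n ⧸ MkId k g),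
      e (Ideal.Quotient.mk (MkId k f) f) = Ideal.Quotient.mk (MkId k g) g) :
    RightEquiv f g :=
  stmt_11_general f g s s' k hmu hk hThm hiso
end
end
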